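/- Conjugation of the reparametrizing automorphisms: assume the curve C, properly parametrized by ψ over K(α), satisfies C = C^{σᵢ} and C = C^{σⱼ}, where σᵢ, σⱼ are K-automorphisms of F sending α to conjugates αᵢ, αⱼ respectively. If τ is a K(α)-automorphism of F with τ(αᵢ) = αⱼ, then applying τ to the coefficients of the Möbius transformation uᵢ (the unique one with ψ = ψ^{σᵢ} ∘ uᵢ) yields uⱼ (the unique one with ψ = ψ^{σⱼ} ∘ uⱼ): τ(uᵢ) = uⱼ. -/

import Mathlib

open Polynomial

noncomputable section

/-- The Zariski closure of a subset of affine `m`-space over `F`. -/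
def zariskiClosure {F : Type*} [Field F] {m : ℕ} (S : Set (Fin m → F)) :
    Set (Fin m → F) :=
  {x | ∀ p : MvPolynomial (Fin m) F,
    (∀ s ∈ S, MvPolynomial.eval s p = 0) → MvPolynomial.eval x p = 0}

/-- A tuple of rational functions is defined at `t` if no denominator vanishes. -/
def definedAt {F : Type*} [Field F] {m : ℕ} (ψ : Fin m → RatFunc F) (t : F) : Prop :=
  ∀ i, (ψ i).denom.eval t ≠ 0

/-- The value of a tuple of rational functions at a parameter `t`. -/
def evalParam {F : Type*} [Field F] {m : ℕ} (ψ : Fin m → RatFunc F) (t : F) :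
    Fin m → F :=
  fun i => (ψ i).num.eval t / (ψ i).denom.eval t

/-- The affine image of a tuple of rational functions. -/
def paramImage {F : Type*} [Field F] {m : ℕ} (ψ : Fin m → RatFunc F) :
    Set (Fin m → F) :=
  {x | ∃ t : F, definedAt ψ t ∧ x = evalParam ψ t}

/-- Properness (generic injectivity, equivalent to birationality in characteristic
zero): only finitely many pairs of distinct parameters give the same point. -/
def GenericallyInjective {F : Type*} [Field F] {m : ℕ} (ψ : Fin m → RatFunc F) : Prop :=
  Set.Finite {p : F × F | p.1 ≠ p.2 ∧ definedAt ψ p.1 ∧ definedAt ψ p.2 ∧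
    evalParam ψ p.1 = evalParam ψ p.2}

/-- The coefficientwise conjugate of a rational function under a field
homomorphism `σ`. -/
def conjRatFunc {F : Type*} [Field F] (σ : F →+* F) (r : RatFunc F) : RatFunc F :=
  algebraMap F[X] (RatFunc F) (r.num.map σ) / algebraMap F[X] (RatFunc F) (r.denom.map σ)

/-- A rational function is a Möbius (fractional linear) transformation if it equals
`(at+b)/(ct+d)` with `ad - bc ≠ 0`. -/
def IsMobius {F : Type*} [Field F] (u : RatFunc F) : Prop :=
  ∃ a b c d : F, a * d - b * c ≠ 0 ∧
    u = algebraMap F[X] (RatFunc F) (C a * X + C b) /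
        algebraMap F[X] (RatFunc F) (C c * X + C d)

/-- Composition `χ ∘ u` of rational functions, by evaluation of `χ` at `u`. -/
def compRatFunc {F : Type*} [Field F] (χ u : RatFunc F) : RatFunc F :=
  RatFunc.eval (algebraMap F (RatFunc F)) u χ

end

/-!
Applying `τ` to coefficients is a ring automorphism of `F(t)` that commutes with composition.
As `τ` fixes `K(α)` and `τ ∘ σᵢ` agrees with `σⱼ` on `K(α)`, it fixes `ψ` and sends `ψ^{σᵢ}` to
`ψ^{σⱼ}`; so applying it to `ψ = ψ^{σᵢ} ∘ uᵢ` gives `ψ^{σⱼ} ∘ τ(uᵢ) = ψ = ψ^{σⱼ} ∘ uⱼ`.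
Conjugation preserves properness, and a proper parametrization `χ` determines its Möbius
reparametrization: if `χ ∘ u = χ ∘ u'` with `u ≠ u'`, then for all but finitely many `t` the
distinct parameters `u(t)`, `u'(t)` give the same point of the curve.
-/
noncomputable section

variable {F : Type*} [Field F] {m : ℕ}

section Conjugation

def conjRingHom (σ : F →+* F) : RatFunc F →+* RatFunc F :=
  RatFunc.mapRingHom (mapRingHom σ)
    (nonZeroDivisors_le_comap_nonZeroDivisors_of_injective _ (map_injective σ σ.injective))

theorem conjRatFunc_eq_conjRingHom (σ : F →+* F) (r : RatFunc F) :
    conjRatFunc σ r = conjRingHom σ r := by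
  rw [conjRingHom, RatFunc.coe_mapRingHom_eq_coe_map, RatFunc.map_apply]
  rfl

theorem conjRingHom_algebraMap (σ : F →+* F) (p : F[X]) :
    conjRingHom σ (algebraMap F[X] (RatFunc F) p) = algebraMap F[X] (RatFunc F) (p.map σ) := by
  rw [← conjRatFunc_eq_conjRingHom, conjRatFunc, RatFunc.num_algebraMap,
    RatFunc.denom_algebraMap, Polynomial.map_one, map_one, div_one]

theorem conjRingHom_comp_algebraMap (σ : F →+* F) :
    (conjRingHom σ).comp (algebraMap F (RatFunc F)) = (algebraMap F (RatFunc F)).comp σ := by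
  ext a
  simp only [RingHom.comp_apply, IsScalarTower.algebraMap_apply F F[X] (RatFunc F),
    Polynomial.algebraMap_eq, conjRingHom_algebraMap, Polynomial.map_C]

theorem RatFunc.num_denom_div_of_monic_of_isCoprime {P Q : F[X]} (hQ : Q.Monic)
    (hPQ : IsCoprime P Q) :
    (algebraMap F[X] (RatFunc F) P / algebraMap F[X] (RatFunc F) Q).num = P ∧
    (algebraMap F[X] (RatFunc F) P / algebraMap F[X] (RatFunc F) Q).denom = Q := by
  set x := algebraMap F[X] (RatFunc F) P / algebraMap F[X] (RatFunc F) Q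
  have hx : x.num * Q = P * x.denom := (RatFunc.num_mul_eq_mul_denom_iff hQ.ne_zero).mpr rfl
  have hdvd : x.denom ∣ Q :=
    (RatFunc.isCoprime_num_denom x).symm.dvd_of_dvd_mul_left ⟨P, by rw [hx, mul_comm]⟩
  have hdvd' : Q ∣ x.denom := hPQ.symm.dvd_of_dvd_mul_left ⟨x.num, by rw [← hx, mul_comm]⟩
  have hdenom : x.denom = Q :=
    eq_of_monic_of_associated (RatFunc.monic_denom x) hQ (associated_of_dvd_dvd hdvd hdvd')
  exact ⟨mul_right_cancel₀ hQ.ne_zero (by rw [hx, hdenom]), hdenom⟩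

theorem num_denom_conjRatFunc (σ : F →+* F) (r : RatFunc F) :
    (conjRatFunc σ r).num = r.num.map σ ∧ (conjRatFunc σ r).denom = r.denom.map σ :=
  RatFunc.num_denom_div_of_monic_of_isCoprime ((RatFunc.monic_denom r).map σ)
    ((RatFunc.isCoprime_num_denom r).map (mapRingHom σ))

theorem conjRatFunc_conjRatFunc (σ σ' : F →+* F) (r : RatFunc F) :
    conjRatFunc σ (conjRatFunc σ' r) = conjRatFunc (σ.comp σ') r := by
  rw [conjRatFunc, (num_denom_conjRatFunc σ' r).1, (num_denom_conjRatFunc σ' r).2, conjRatFunc,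
    Polynomial.map_map, Polynomial.map_map]

theorem conjRatFunc_id (r : RatFunc F) : conjRatFunc (RingHom.id F) r = r := by
  rw [conjRatFunc, Polynomial.map_id, Polynomial.map_id, RatFunc.num_div_denom]

theorem conjRatFunc_congr {σ₁ σ₂ : F →+* F} {S : Set F} (h : Set.EqOn σ₁ σ₂ S) {r : RatFunc F}
    (hr : ∀ k, r.num.coeff k ∈ S ∧ r.denom.coeff k ∈ S) :
    conjRatFunc σ₁ r = conjRatFunc σ₂ r := by
  unfold conjRatFunc
  congr 2 <;> ext k <;> simp only [coeff_map]
  exacts [h (hr k).1, h (hr k).2]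

theorem conjRatFunc_compRatFunc (σ : F →+* F) (χ u : RatFunc F) :
    conjRatFunc σ (compRatFunc χ u) = compRatFunc (conjRatFunc σ χ) (conjRatFunc σ u) := by
  rw [compRatFunc, compRatFunc, RatFunc.eval, RatFunc.eval, (num_denom_conjRatFunc σ χ).1,
    (num_denom_conjRatFunc σ χ).2, conjRatFunc_eq_conjRingHom σ, conjRatFunc_eq_conjRingHom σ u,
    map_div₀, hom_eval₂, hom_eval₂, conjRingHom_comp_algebraMap, eval₂_map, eval₂_map]

theorem IsMobius.conjRatFunc (σ : F →+* F) {u : RatFunc F} (hu : IsMobius u) :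
    IsMobius (conjRatFunc σ u) := by
  obtain ⟨a, b, c, d, hdet, rfl⟩ := hu
  refine ⟨σ a, σ b, σ c, σ d, ?_, ?_⟩
  · rwa [← map_mul, ← map_mul, ← map_sub, _root_.map_ne_zero]
  · simp only [conjRatFunc_eq_conjRingHom, map_div₀, conjRingHom_algebraMap, Polynomial.map_add,
      Polynomial.map_mul, Polynomial.map_C, Polynomial.map_X]

theorem definedAt_conjRatFunc_iff (σ : F →+* F) (χ : Fin m → RatFunc F) (t : F) :
    definedAt (fun i => conjRatFunc σ (χ i)) (σ t) ↔ definedAt χ t := by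
  simp only [definedAt, num_denom_conjRatFunc, eval_map, eval₂_at_apply, _root_.map_ne_zero]

theorem evalParam_conjRatFunc (σ : F →+* F) (χ : Fin m → RatFunc F) (t : F) :
    evalParam (fun i => conjRatFunc σ (χ i)) (σ t) = σ ∘ evalParam χ t := by
  ext i
  simp only [evalParam, num_denom_conjRatFunc, eval_map, eval₂_at_apply, Function.comp_apply,
    map_div₀]

theorem GenericallyInjective.conjRatFunc {χ : Fin m → RatFunc F} (hχ : GenericallyInjective χ)
    {σ : F →+* F} (hσ : Function.Surjective σ) :
    GenericallyInjective fun i => conjRatFunc σ (χ i) := by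
  refine (hχ.image (Prod.map σ σ)).subset ?_
  rintro ⟨s, t⟩ ⟨hst, hs, ht, heq⟩
  obtain ⟨s, rfl⟩ := hσ s
  obtain ⟨t, rfl⟩ := hσ t
  refine ⟨(s, t), ⟨fun h => hst (congrArg σ h), (definedAt_conjRatFunc_iff σ χ s).mp hs,
    (definedAt_conjRatFunc_iff σ χ t).mp ht, ?_⟩, rfl⟩
  rw [evalParam_conjRatFunc, evalParam_conjRatFunc] at heq
  exact (Function.Injective.comp_left σ.injective) heq

end Conjugation

section MobiusUniqueness

theorem aeval_ne_zero_of_notMem_range [IsAlgClosed F] {A : Type*} [CommRing A] [IsDomain A]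
    [Algebra F A] {u : A} (hu : u ∉ Set.range (algebraMap F A)) {Q : F[X]} (hQ : Q ≠ 0) :
    aeval u Q ≠ 0 := by
  rw [(IsAlgClosed.splits Q).eq_prod_roots, map_mul, aeval_C, map_multiset_prod,
    Multiset.map_map]
  refine mul_ne_zero ?_ (Multiset.prod_ne_zero ?_)
  · exact (_root_.map_ne_zero_iff _ (algebraMap F A).injective).mpr (leadingCoeff_ne_zero.mpr hQ)
  · simp only [Multiset.mem_map, Function.comp_apply, map_sub, aeval_X, aeval_C, not_exists,
      not_and]
    exact fun r _ h => hu ⟨r, (sub_eq_zero.mp h).symm⟩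

/-- `P(L₁/L₂) · L₂^N` as a polynomial: it clears denominators, so that `χ ∘ (L₁/L₂)` can be
evaluated at points. -/
def homogenizedComp (N : ℕ) (P L₁ L₂ : F[X]) : F[X] :=
  MvPolynomial.aeval ![L₁, L₂] (P.homogenize N)

theorem map_homogenizedComp {L : Type*} [Field L] (φ : F[X] →+* L) {N : ℕ} {P : F[X]}
    (hN : P.natDegree ≤ N) (L₁ : F[X]) {L₂ : F[X]} (hL₂ : φ L₂ ≠ 0) :
    φ (homogenizedComp N P L₁ L₂) = P.eval₂ (φ.comp C) (φ L₁ / φ L₂) * φ L₂ ^ N := by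
  rw [homogenizedComp, MvPolynomial.aeval_def, MvPolynomial.eval₂_comp_left,
    ← MvPolynomial.eval_map, ← homogenize_map, eval_homogenize (natDegree_map_le.trans hN) _
      (by simpa using hL₂), eval_map]
  simp [Polynomial.algebraMap_eq]

theorem eval_homogenizedComp {N : ℕ} {P : F[X]} (hN : P.natDegree ≤ N) (L₁ : F[X]) {L₂ : F[X]}
    {t : F} (ht : L₂.eval t ≠ 0) :
    (homogenizedComp N P L₁ L₂).eval t = P.eval (L₁.eval t / L₂.eval t) * L₂.eval t ^ N := by
  have hC : (evalRingHom t).comp C = RingHom.id F := RingHom.ext fun _ => eval_C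
  simpa [hC] using map_homogenizedComp (evalRingHom t) hN L₁ ht

theorem algebraMap_homogenizedComp {N : ℕ} {P : F[X]} (hN : P.natDegree ≤ N) (L₁ : F[X])
    {L₂ : F[X]} (hL₂ : L₂ ≠ 0) :
    algebraMap F[X] (RatFunc F) (homogenizedComp N P L₁ L₂) =
      aeval (algebraMap F[X] (RatFunc F) L₁ / algebraMap F[X] (RatFunc F) L₂) P *
        algebraMap F[X] (RatFunc F) L₂ ^ N := by
  rw [map_homogenizedComp _ hN L₁ (RatFunc.algebraMap_ne_zero hL₂), aeval_def,
    ← Polynomial.algebraMap_eq, ← IsScalarTower.algebraMap_eq]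

theorem compRatFunc_div_eq (r : RatFunc F) {N : ℕ} (hnum : r.num.natDegree ≤ N)
    (hdenom : r.denom.natDegree ≤ N) (L₁ : F[X]) {L₂ : F[X]} (hL₂ : L₂ ≠ 0) :
    compRatFunc r (algebraMap F[X] (RatFunc F) L₁ / algebraMap F[X] (RatFunc F) L₂) =
      algebraMap F[X] (RatFunc F) (homogenizedComp N r.num L₁ L₂) /
        algebraMap F[X] (RatFunc F) (homogenizedComp N r.denom L₁ L₂) := by
  rw [algebraMap_homogenizedComp hnum L₁ hL₂, algebraMap_homogenizedComp hdenom L₁ hL₂,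
    mul_div_mul_right _ _ (pow_ne_zero _ (RatFunc.algebraMap_ne_zero hL₂))]
  rfl

theorem homogenizedComp_ne_zero [IsAlgClosed F] {N : ℕ} {P : F[X]} (hN : P.natDegree ≤ N)
    (hP : P ≠ 0) {L₁ L₂ : F[X]} (hL₂ : L₂ ≠ 0)
    (hu : algebraMap F[X] (RatFunc F) L₁ / algebraMap F[X] (RatFunc F) L₂ ∉
      Set.range (algebraMap F (RatFunc F))) :
    homogenizedComp N P L₁ L₂ ≠ 0 := by
  intro h
  have := algebraMap_homogenizedComp hN L₁ hL₂
  rw [h, map_zero] at this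
  exact mul_ne_zero (aeval_ne_zero_of_notMem_range hu hP)
    (pow_ne_zero _ (RatFunc.algebraMap_ne_zero hL₂)) this.symm

theorem homogenizedComp_mul_eq_of_compRatFunc_eq [IsAlgClosed F] {r : RatFunc F} {N : ℕ}
    (hnum : r.num.natDegree ≤ N) (hdenom : r.denom.natDegree ≤ N) {L₁ L₂ L₁' L₂' : F[X]}
    (hL₂ : L₂ ≠ 0) (hL₂' : L₂' ≠ 0)
    (hu : algebraMap F[X] (RatFunc F) L₁ / algebraMap F[X] (RatFunc F) L₂ ∉
      Set.range (algebraMap F (RatFunc F)))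
    (hu' : algebraMap F[X] (RatFunc F) L₁' / algebraMap F[X] (RatFunc F) L₂' ∉
      Set.range (algebraMap F (RatFunc F)))
    (h : compRatFunc r (algebraMap F[X] (RatFunc F) L₁ / algebraMap F[X] (RatFunc F) L₂) =
      compRatFunc r (algebraMap F[X] (RatFunc F) L₁' / algebraMap F[X] (RatFunc F) L₂')) :
    homogenizedComp N r.num L₁ L₂ * homogenizedComp N r.denom L₁' L₂' =
      homogenizedComp N r.num L₁' L₂' * homogenizedComp N r.denom L₁ L₂ := by
  rw [compRatFunc_div_eq r hnum hdenom L₁ hL₂, compRatFunc_div_eq r hnum hdenom L₁' hL₂',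
    div_eq_div_iff (RatFunc.algebraMap_ne_zero (homogenizedComp_ne_zero hdenom r.denom_ne_zero
      hL₂ hu)) (RatFunc.algebraMap_ne_zero (homogenizedComp_ne_zero hdenom r.denom_ne_zero
      hL₂' hu')), ← map_mul, ← map_mul] at h
  exact RatFunc.algebraMap_injective F h

theorem eval_div_homogenizedComp (r : RatFunc F) {N : ℕ} (hnum : r.num.natDegree ≤ N)
    (hdenom : r.denom.natDegree ≤ N) (L₁ : F[X]) {L₂ : F[X]} {t : F} (ht : L₂.eval t ≠ 0) :
    (homogenizedComp N r.num L₁ L₂).eval t / (homogenizedComp N r.denom L₁ L₂).eval t =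
      r.num.eval (L₁.eval t / L₂.eval t) / r.denom.eval (L₁.eval t / L₂.eval t) := by
  rw [eval_homogenizedComp hnum L₁ ht, eval_homogenizedComp hdenom L₁ ht,
    mul_div_mul_right _ _ (pow_ne_zero _ ht)]

theorem Polynomial.C_mul_X_add_C_eq_iff {R : Type*} [Semiring R] {a b a' b' : R} :
    C a * X + C b = C a' * X + C b' ↔ a = a' ∧ b = b' := by
  refine ⟨fun h => ⟨?_, ?_⟩, fun ⟨ha, hb⟩ => ha ▸ hb ▸ rfl⟩
  · simpa using congrArg (coeff · 1) h
  · simpa using congrArg (coeff · 0) h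

theorem C_mul_X_add_C_ne_zero_of_det_ne_zero {a b c d : F} (hdet : a * d - b * c ≠ 0) :
    C c * X + C d ≠ 0 := by
  intro h
  have h₀ : C c * X + C d = C 0 * X + C 0 := by simpa using h
  rw [C_mul_X_add_C_eq_iff] at h₀
  exact hdet (by rw [h₀.1, h₀.2]; ring)

theorem IsMobius.notMem_range {u : RatFunc F} (hu : IsMobius u) :
    u ∉ Set.range (algebraMap F (RatFunc F)) := by
  obtain ⟨a, b, c, d, hdet, rfl⟩ := hu
  rintro ⟨e, he⟩
  rw [eq_div_iff (RatFunc.algebraMap_ne_zero (C_mul_X_add_C_ne_zero_of_det_ne_zero hdet)),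
    IsScalarTower.algebraMap_apply F F[X] (RatFunc F), ← map_mul] at he
  have h := RatFunc.algebraMap_injective F he
  rw [Polynomial.algebraMap_eq, mul_add, ← mul_assoc, ← C_mul, ← C_mul,
    C_mul_X_add_C_eq_iff] at h
  exact hdet (by rw [← h.1, ← h.2]; ring)

theorem IsMobius.exists_eq_div {u : RatFunc F} (hu : IsMobius u) :
    ∃ L₁ L₂ : F[X], L₂ ≠ 0 ∧
      u = algebraMap F[X] (RatFunc F) L₁ / algebraMap F[X] (RatFunc F) L₂ ∧
      Set.InjOn (fun t => L₁.eval t / L₂.eval t) {t | L₂.eval t ≠ 0} := by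
  obtain ⟨a, b, c, d, hdet, rfl⟩ := hu
  refine ⟨C a * X + C b, C c * X + C d, ?_, rfl, ?_⟩
  · exact C_mul_X_add_C_ne_zero_of_det_ne_zero hdet
  · intro t₁ ht₁ t₂ ht₂ h
    simp only [Set.mem_ofPred_eq] at ht₁ ht₂ h
    rw [div_eq_div_iff ht₁ ht₂] at h
    simp only [eval_add, eval_mul, eval_C, eval_X] at h
    have : (a * d - b * c) * (t₁ - t₂) = 0 := by linear_combination h
    exact sub_eq_zero.mp ((mul_eq_zero.mp this).resolve_left hdet)

theorem Polynomial.eventually_cofinite_eval_ne_zero {P : F[X]} (hP : P ≠ 0) :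
    ∀ᶠ t in Filter.cofinite, P.eval t ≠ 0 :=
  Filter.eventually_cofinite.mpr <| by
    simpa only [ne_eq, not_not, IsRoot.def] using finite_setOfPred_isRoot hP

theorem eventually_eval_div_eq_of_compRatFunc_eq [IsAlgClosed F] {r : RatFunc F}
    {L₁ L₂ L₁' L₂' : F[X]} (hL₂ : L₂ ≠ 0) (hL₂' : L₂' ≠ 0)
    (hu : algebraMap F[X] (RatFunc F) L₁ / algebraMap F[X] (RatFunc F) L₂ ∉
      Set.range (algebraMap F (RatFunc F)))
    (hu' : algebraMap F[X] (RatFunc F) L₁' / algebraMap F[X] (RatFunc F) L₂' ∉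
      Set.range (algebraMap F (RatFunc F)))
    (h : compRatFunc r (algebraMap F[X] (RatFunc F) L₁ / algebraMap F[X] (RatFunc F) L₂) =
      compRatFunc r (algebraMap F[X] (RatFunc F) L₁' / algebraMap F[X] (RatFunc F) L₂')) :
    ∀ᶠ t in Filter.cofinite,
      r.denom.eval (L₁.eval t / L₂.eval t) ≠ 0 ∧ r.denom.eval (L₁'.eval t / L₂'.eval t) ≠ 0 ∧
      r.num.eval (L₁.eval t / L₂.eval t) / r.denom.eval (L₁.eval t / L₂.eval t) =
        r.num.eval (L₁'.eval t / L₂'.eval t) / r.denom.eval (L₁'.eval t / L₂'.eval t) := by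
  set N := max r.num.natDegree r.denom.natDegree
  have hnum : r.num.natDegree ≤ N := le_max_left _ _
  have hdenom : r.denom.natDegree ≤ N := le_max_right _ _
  have hcross := homogenizedComp_mul_eq_of_compRatFunc_eq hnum hdenom hL₂ hL₂' hu hu' h
  filter_upwards [eventually_cofinite_eval_ne_zero hL₂, eventually_cofinite_eval_ne_zero hL₂',
    eventually_cofinite_eval_ne_zero (homogenizedComp_ne_zero hdenom r.denom_ne_zero hL₂ hu),
    eventually_cofinite_eval_ne_zero (homogenizedComp_ne_zero hdenom r.denom_ne_zero hL₂' hu')]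
    with t ht ht' hd hd'
  refine ⟨left_ne_zero_of_mul (eval_homogenizedComp hdenom L₁ ht ▸ hd),
    left_ne_zero_of_mul (eval_homogenizedComp hdenom L₁' ht' ▸ hd'), ?_⟩
  rw [← eval_div_homogenizedComp r hnum hdenom L₁ ht,
    ← eval_div_homogenizedComp r hnum hdenom L₁' ht', div_eq_div_iff hd hd', ← eval_mul,
    ← eval_mul, hcross]

theorem GenericallyInjective.eq_of_compRatFunc_eq [IsAlgClosed F] {χ : Fin m → RatFunc F}
    (hχ : GenericallyInjective χ) {u u' : RatFunc F} (hu : IsMobius u) (hu' : IsMobius u')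
    (h : ∀ i, compRatFunc (χ i) u = compRatFunc (χ i) u') : u = u' := by
  have hu₀ := hu.notMem_range
  have hu₀' := hu'.notMem_range
  obtain ⟨L₁, L₂, hL₂, rfl, hinj⟩ := hu.exists_eq_div
  obtain ⟨L₁', L₂', hL₂', rfl, -⟩ := hu'.exists_eq_div
  by_contra hne
  have hD : L₁ * L₂' - L₁' * L₂ ≠ 0 := fun hD => hne <| by
    rw [div_eq_div_iff (RatFunc.algebraMap_ne_zero hL₂) (RatFunc.algebraMap_ne_zero hL₂'),
      ← map_mul, ← map_mul, sub_eq_zero.mp hD]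
  have hgood := (eventually_cofinite_eval_ne_zero hL₂).and <|
    (eventually_cofinite_eval_ne_zero hL₂').and <| (eventually_cofinite_eval_ne_zero hD).and <|
      Filter.eventually_all.mpr fun i =>
        eventually_eval_div_eq_of_compRatFunc_eq hL₂ hL₂' hu₀ hu₀' (h i)
  refine Set.infinite_of_injOn_mapsTo
    (f := fun t => (L₁.eval t / L₂.eval t, L₁'.eval t / L₂'.eval t))
    (fun t ht t' ht' heq => hinj ht.1 ht'.1 (congrArg Prod.fst heq)) ?_
    (Filter.frequently_cofinite_iff_infinite.mp hgood.frequently) hχ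
  rintro t ⟨ht, ht', htD, htχ⟩
  refine ⟨fun heq => htD ?_, fun i => (htχ i).1, fun i => (htχ i).2.1,
    funext fun i => (htχ i).2.2⟩
  rw [div_eq_div_iff ht ht'] at heq
  rw [eval_sub, eval_mul, eval_mul, heq, sub_self]

end MobiusUniqueness

open IntermediateField in
theorem eqOn_adjoin_simple_of_eq {K L : Type*} [Field K] [Algebra K F] [Field L] [Algebra K L]
    {α : F} {φ₁ φ₂ : F →ₐ[K] L} (h : φ₁ α = φ₂ α) : Set.EqOn φ₁ φ₂ K⟮α⟯ := fun x hx =>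
  DFunLike.congr_fun (IntermediateField.adjoin_algHom_ext K (φ₁ := φ₁.comp K⟮α⟯.val)
    (φ₂ := φ₂.comp K⟮α⟯.val) (by rintro _ rfl; exact h)) ⟨x, hx⟩

end

open IntermediateField in
theorem conjugate_of_reparametrizing_mobius_general {K F : Type*} [Field K] [Field F]
    [IsAlgClosed F] [Algebra K F] {m : ℕ} (α : F)
    (σi σj τ : F ≃ₐ[K] F) (hτα : τ α = α) (hτ : τ (σi α) = σj α)
    (ψ : Fin m → RatFunc F) (hψ : GenericallyInjective ψ)
    (hcoeff : ∀ i k, (ψ i).num.coeff k ∈ K⟮α⟯ ∧ (ψ i).denom.coeff k ∈ K⟮α⟯)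
    (ui uj : RatFunc F) (hui : IsMobius ui) (huj : IsMobius uj)
    (hψi : ∀ i, ψ i = compRatFunc (conjRatFunc (σi : F →+* F) (ψ i)) ui)
    (hψj : ∀ i, ψ i = compRatFunc (conjRatFunc (σj : F →+* F) (ψ i)) uj) :
    conjRatFunc (τ : F →+* F) ui = uj := by
  have hτσi : Set.EqOn ((τ : F →ₐ[K] F).comp σi) (σj : F →ₐ[K] F) K⟮α⟯ :=
    eqOn_adjoin_simple_of_eq hτ
  have hτ_fix : Set.EqOn (τ : F →ₐ[K] F) (AlgHom.id K F) K⟮α⟯ := eqOn_adjoin_simple_of_eq hτα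
  have hψσi i : conjRatFunc τ (conjRatFunc σi (ψ i)) = conjRatFunc σj (ψ i) := by
    rw [conjRatFunc_conjRatFunc]
    exact conjRatFunc_congr hτσi (hcoeff i)
  have hψτ i : conjRatFunc τ (ψ i) = ψ i :=
    (conjRatFunc_congr hτ_fix (hcoeff i)).trans (conjRatFunc_id _)
  refine (hψ.conjRatFunc (σ := σj) σj.surjective).eq_of_compRatFunc_eq (hui.conjRatFunc _) huj
    fun i => ?_
  rw [← hψj i, ← hψσi i, ← conjRatFunc_compRatFunc, ← hψi i, hψτ i]

open IntermediateField in
/-- Conjugation of the reparametrizing automorphisms: if `C = C^{σᵢ} = C^{σⱼ}` and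
`τ` is a `K(α)`-automorphism with `τ(σᵢ(α)) = σⱼ(α)`, then applying `τ` to the
coefficients of the Möbius transformation `uᵢ` (with `ψ = ψ^{σᵢ} ∘ uᵢ`) yields `uⱼ`
(the one with `ψ = ψ^{σⱼ} ∘ uⱼ`). -/
theorem conjugate_of_reparametrizing_mobius {K F : Type*} [Field K] [Field F]
    [IsAlgClosed F] [CharZero F] [Algebra K F] {m : ℕ} (α : F)
    (σi σj τ : F ≃ₐ[K] F) (hτα : τ α = α) (hτ : τ (σi α) = σj α)
    (ψ : Fin m → RatFunc F) (hψ : GenericallyInjective ψ)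
    (hcoeff : ∀ i k, (ψ i).num.coeff k ∈ K⟮α⟯ ∧ (ψ i).denom.coeff k ∈ K⟮α⟯)
    (hCi : zariskiClosure (paramImage ψ)
      = zariskiClosure (paramImage fun i => conjRatFunc (σi : F →+* F) (ψ i)))
    (hCj : zariskiClosure (paramImage ψ)
      = zariskiClosure (paramImage fun i => conjRatFunc (σj : F →+* F) (ψ i)))
    (ui uj : RatFunc F) (hui : IsMobius ui) (huj : IsMobius uj)
    (hψi : ∀ i, ψ i = compRatFunc (conjRatFunc (σi : F →+* F) (ψ i)) ui)
    (hψj : ∀ i, ψ i = compRatFunc (conjRatFunc (σj : F →+* F) (ψ i)) uj) :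
    conjRatFunc (τ : F →+* F) ui = uj :=
  conjugate_of_reparametrizing_mobius_general α σi σj τ hτα hτ ψ hψ hcoeff ui uj hui huj hψi hψj
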